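/- arXiv:1912.04830 — 2 statements merged into one kernel-verified Lean document; each statement's English description precedes it below -/
import Mathlib

section
/- The operator U on Schwartz functions defined via the Fourier multiplier 1/(iξ + m^2), i.e. U(f)(t) = (1/2π) ∫ e^{-iξt} f̂(ξ)/(iξ + m^2) dξ, coincides with convolution with G: U(f)(t) = ∫_{-∞}^t e^{-m^2(t-s)} f(s) ds. -/
/-!
The kernel `G = causalExpKernel (m ^ 2)` is integrable with Fourier transform
`1 / (m ^ 2 + 2πiξ)`. For a Schwartz function `f`, `𝓕 (G ⋆ f) = 𝓕 G · 𝓕 f` is integrable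
(`𝓕 G` is bounded and `𝓕 f` is Schwartz) and `G ⋆ f` is continuous, so Fourier inversion
gives `G ⋆ f = 𝓕⁻ (𝓕 G · 𝓕 f)`. After the substitution `ξ ↦ 2πξ`, which passes from
Mathlib's normalisation `e^{-2πiξs}` to the angular frequency of the statement, the right-hand
side is the multiplier integral, while `(G ⋆ f) t` is the integral over `s ≤ t`.
-/

open MeasureTheory Complex Set Filter
open scoped FourierTransform Convolution Real SchwartzMap

section Fourier

variable {V E : Type*} [NormedAddCommGroup V] [InnerProductSpace ℝ V] [FiniteDimensional ℝ V]
  [MeasurableSpace V] [BorelSpace V] [NormedAddCommGroup E] [NormedSpace ℂ E]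

theorem MeasureTheory.Integrable.continuous_fourier {K : V → E} (hK : Integrable K) :
    Continuous (𝓕 K) :=
  VectorFourier.fourierIntegral_continuous Real.continuous_fourierChar
    (innerSL ℝ).continuous₂ hK

theorem Real.norm_fourier_le_integral_norm (K : V → E) (ξ : V) : ‖𝓕 K ξ‖ ≤ ∫ v, ‖K v‖ :=
  VectorFourier.norm_fourierIntegral_le_integral_norm _ _ _ _ _

theorem SchwartzMap.fourierInv_fourier_mul_eq_convolution {K : V → ℂ} (hK : Integrable K)
    (f : 𝓢(V, ℂ)) :
    𝓕⁻ (fun ξ => 𝓕 K ξ * 𝓕 (f : V → ℂ) ξ) = K ⋆[ContinuousLinearMap.mul ℂ ℂ] f := by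
  have hbdd : BddAbove (range fun x => ‖f x‖) :=
    ⟨‖f.toBoundedContinuousFunction‖, forall_mem_range.2 fun x =>
      f.toBoundedContinuousFunction.norm_coe_le_norm x⟩
  have hcont : Continuous (K ⋆[ContinuousLinearMap.mul ℂ ℂ] f) :=
    hbdd.continuous_convolution_right_of_integrable _ hK f.continuous
  have hfourier : 𝓕 (K ⋆[ContinuousLinearMap.mul ℂ ℂ] f) = fun ξ => 𝓕 K ξ * 𝓕 (f : V → ℂ) ξ :=
    funext (Real.fourier_mul_convolution_eq hK f.integrable)
  have hprod : Integrable fun ξ => 𝓕 K ξ * 𝓕 (f : V → ℂ) ξ :=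
    (𝓕 f).integrable.bdd_mul hK.continuous_fourier.aestronglyMeasurable
      (Eventually.of_forall (Real.norm_fourier_le_integral_norm K))
  rw [← hfourier] at hprod ⊢
  exact hcont.fourierInv_fourier_eq (hK.integrable_convolution _ f.integrable) hprod

theorem Real.fourierInv_comp_two_pi_mul (h : ℝ → E) (t : ℝ) :
    𝓕⁻ (fun ξ => h (2 * π * ξ)) t = (2 * π)⁻¹ • ∫ w : ℝ, cexp (I * w * t) • h w := by
  have hscale := Measure.integral_comp_mul_left (fun w : ℝ => cexp (I * w * t) • h w) (2 * π)
  rw [abs_inv, abs_of_pos Real.two_pi_pos] at hscale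
  rw [← hscale, Real.fourierInv_eq']
  congr 1 with ξ
  congr 2
  simp only [RCLike.inner_apply, conj_trivial]
  push_cast
  ring

end Fourier

section CausalExpKernel

noncomputable def causalExpKernel (a : ℂ) : ℝ → ℂ := (Ioi 0).indicator fun u => cexp (-a * u)

variable {a : ℂ}

theorem integrable_causalExpKernel (ha : 0 < a.re) : Integrable (causalExpKernel a) := by
  rw [causalExpKernel, integrable_indicator_iff measurableSet_Ioi]
  exact integrableOn_exp_mul_complex_Ioi (a := -a) (by simpa using ha) 0

theorem fourier_causalExpKernel (ha : 0 < a.re) (ξ : ℝ) :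
    𝓕 (causalExpKernel a) ξ = 1 / (a + 2 * π * ξ * I) := by
  have hre : (-(a + 2 * π * ξ * I)).re < 0 := by simpa using ha
  calc 𝓕 (causalExpKernel a) ξ = ∫ u : ℝ in Ioi 0, cexp (-(a + 2 * π * ξ * I) * u) := by
        rw [Real.fourier_real_eq_integral_exp_smul, ← integral_indicator measurableSet_Ioi]
        congr 1 with u
        by_cases hu : u ∈ Ioi (0 : ℝ)
        · simp only [causalExpKernel, indicator_of_mem hu, smul_eq_mul, ← Complex.exp_add]
          congr 1
          push_cast
          ring
        · simp [causalExpKernel, indicator_of_notMem hu]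
    _ = 1 / (a + 2 * π * ξ * I) := by
        rw [integral_exp_mul_complex_Ioi hre 0, ofReal_zero, mul_zero, Complex.exp_zero,
          div_neg, neg_div, neg_neg]

theorem causalExpKernel_convolution_apply (g : ℝ → ℂ) (t : ℝ) :
    (causalExpKernel a ⋆[ContinuousLinearMap.mul ℂ ℂ] g) t
      = ∫ s in Iic t, cexp (-a * (t - s)) * g s := by
  rw [integral_Iic_eq_integral_Iio, ← integral_indicator measurableSet_Iio,
    ← integral_sub_left_eq_self _ volume t, convolution_def]
  congr 1 with u
  by_cases hu : 0 < u <;> simp [causalExpKernel, hu]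

end CausalExpKernel

/-- The Fourier multiplier `1/(iξ + m²)` (with the convention
`f̂(ξ) = ∫ e^{-iξs} f(s) ds`, inverse `(1/2π) ∫ e^{iξt} · dξ`) acts as
convolution with the Green's function `G(t) = e^{-m² t} 1_{t>0}`. -/
theorem stmt3 (m : ℝ) (hm : 0 < m) (f : SchwartzMap ℝ ℂ)
    (fhat : ℝ → ℂ)
    (hfhat : ∀ ξ : ℝ, fhat ξ = ∫ s : ℝ, Complex.exp (-Complex.I * (ξ : ℂ) * (s : ℂ)) * f s)
    (t : ℝ) :
    (1 / (2 * (Real.pi : ℂ))) *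
        ∫ ξ : ℝ, Complex.exp (Complex.I * (ξ : ℂ) * (t : ℂ)) * fhat ξ /
          (Complex.I * (ξ : ℂ) + (m : ℂ)^2)
      = ∫ s in Set.Iic t, Complex.exp (-(m : ℂ)^2 * ((t : ℂ) - (s : ℂ))) * f s := by
  have hm2 : 0 < ((m : ℂ) ^ 2).re := by simpa [← ofReal_pow] using pow_pos hm 2
  have hfourier (ξ : ℝ) : 𝓕 (f : ℝ → ℂ) ξ = fhat (2 * π * ξ) := by
    rw [hfhat, Real.fourier_real_eq_integral_exp_smul]
    congr 1 with s
    rw [smul_eq_mul]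
    congr 2
    push_cast
    ring
  have hmultiplier (ξ : ℝ) : 𝓕 (causalExpKernel ((m : ℂ) ^ 2)) ξ * 𝓕 (f : ℝ → ℂ) ξ
      = fhat (2 * π * ξ) / (I * (2 * π * ξ : ℝ) + (m : ℂ) ^ 2) := by
    rw [fourier_causalExpKernel hm2, hfourier, one_div_mul_eq_div]
    push_cast
    ring
  calc _ = (2 * π)⁻¹ • ∫ w : ℝ, cexp (I * w * t) • (fhat w / (I * w + (m : ℂ) ^ 2)) := by
        simp only [real_smul, smul_eq_mul, mul_div_assoc, one_div, ofReal_inv, ofReal_mul,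
          ofReal_ofNat]
    _ = 𝓕⁻ (fun ξ => fhat (2 * π * ξ) / (I * (2 * π * ξ : ℝ) + (m : ℂ) ^ 2)) t :=
        (Real.fourierInv_comp_two_pi_mul _ t).symm
    _ = 𝓕⁻ (fun ξ => 𝓕 (causalExpKernel ((m : ℂ) ^ 2)) ξ * 𝓕 (f : ℝ → ℂ) ξ) t := by
        simp only [hmultiplier]
    _ = (causalExpKernel ((m : ℂ) ^ 2) ⋆[ContinuousLinearMap.mul ℂ ℂ] f) t := by
        rw [SchwartzMap.fourierInv_fourier_mul_eq_convolution (integrable_causalExpKernel hm2)]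
    _ = _ := causalExpKernel_convolution_apply _ _
end

section
/- Let V : ℝ → ℝ be smooth, bounded, with all derivatives bounded, m > 0, and f : ℝ → ℝ≥0 smooth with compact support. Then the integral equation φ(t) + ∫_{-∞}^t e^{-m^2(t-s)} f(s) V'(φ(s)) ds = ψ(t), for a given continuous bounded ψ, has a unique continuous solution φ : ℝ → ℝ. -/
open MeasureTheory Set


lemma primIic_continuous (g : ℝ → ℝ) (hg : Integrable g) :
    Continuous (fun t => ∫ s in Set.Iic t, g s) := by
  have h : (fun t : ℝ => ∫ s in Set.Iic t, g s)
      = fun t : ℝ => (∫ s in Set.Iic 0, g s) + ∫ s in (0:ℝ)..t, g s := by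
    funext t
    rw [← intervalIntegral.integral_Iic_sub_Iic hg.integrableOn hg.integrableOn]
    ring
  rw [h]
  exact continuous_const.add (hg.continuous_primitive 0)

lemma exists_left_zero (f : ℝ → ℝ) (hfc : HasCompactSupport f) :
    ∃ t0 : ℝ, ∀ s ≤ t0, f s = 0 := by
  obtain ⟨r, hr⟩ := hfc.isBounded.subset_closedBall 0
  refine ⟨-(|r| + 1), fun s hs => ?_⟩
  apply image_eq_zero_of_notMem_tsupport
  intro hmem
  have := hr hmem
  simp only [Metric.mem_closedBall, Real.dist_eq, sub_zero] at this
  have h1 : |s| ≤ r := this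
  have h2 : s ≤ -(|r| + 1) := hs
  have := neg_abs_le s
  have := le_abs_self r
  linarith [abs_nonneg s, neg_le_abs s, abs_le.mp h1]

lemma primIic_hasDerivAt (f : ℝ → ℝ) (hf : Continuous f) (hfi : Integrable f) (x : ℝ) :
    HasDerivAt (fun t => ∫ s in Set.Iic t, f s) (f x) x := by
  have h : (fun t : ℝ => ∫ s in Set.Iic t, f s)
      = fun t : ℝ => (∫ s in Set.Iic 0, f s) + ∫ s in (0:ℝ)..t, f s := by
    funext t
    rw [← intervalIntegral.integral_Iic_sub_Iic hfi.integrableOn hfi.integrableOn]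
    ring
  rw [h]
  exact (intervalIntegral.integral_hasDerivAt_right hfi.intervalIntegrable
    hf.stronglyMeasurable.stronglyMeasurableAtFilter hf.continuousAt).const_add _

lemma primIic_pow (f : ℝ → ℝ) (hf : Continuous f) (hfc : HasCompactSupport f) (n : ℕ) (t : ℝ) :
    ∫ s in Set.Iic t, f s * (∫ u in Set.Iic s, f u) ^ n
      = (∫ s in Set.Iic t, f s) ^ (n + 1) / (n + 1) := by
  set A : ℝ → ℝ := fun t => ∫ s in Set.Iic t, f s with hA
  have hfi : Integrable f := hf.integrable_of_hasCompactSupport hfc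
  have hAc : Continuous A := primIic_continuous f hfi
  have hg : Continuous (fun s => f s * A s ^ n) := hf.mul (hAc.pow n)
  have hgc : HasCompactSupport (fun s => f s * A s ^ n) := by
    exact hfc.mul_right
  have hgi : Integrable (fun s => f s * A s ^ n) := hg.integrable_of_hasCompactSupport hgc
  have hF : ∀ x : ℝ, HasDerivAt (fun y => A y ^ (n + 1) / (n + 1)) (f x * A x ^ n) x := by
    intro x
    have h1 := ((primIic_hasDerivAt f hf hfi x).pow (n + 1)).div_const ((n : ℝ) + 1)
    refine HasDerivAt.congr_deriv h1 ?_
    have : ((n : ℝ) + 1) ≠ 0 := by positivity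
    push_cast
    field_simp
    ring
  obtain ⟨t0, ht0⟩ := exists_left_zero f hfc
  have hAt0 : A t0 = 0 :=
    setIntegral_eq_zero_of_forall_eq_zero (fun s hs => ht0 s hs)
  have hIt0 : (∫ s in Set.Iic t0, f s * A s ^ n) = 0 :=
    setIntegral_eq_zero_of_forall_eq_zero (fun s hs => by rw [ht0 s hs, zero_mul])
  have hsub := intervalIntegral.integral_Iic_sub_Iic (a := t0) (b := t)
    hgi.integrableOn hgi.integrableOn
  have hftc := intervalIntegral.integral_eq_sub_of_hasDerivAt (a := t0) (b := t)
    (f := fun y => A y ^ (n + 1) / ((n : ℝ) + 1)) (fun x _ => hF x) hgi.intervalIntegrable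
  rw [hIt0, sub_zero] at hsub
  show ∫ s in Set.Iic t, f s * A s ^ n = A t ^ (n + 1) / ((n:ℝ) + 1)
  rw [hsub, hftc]
  simp only [hAt0]
  norm_num

noncomputable def Kop (m : ℝ) (f dV : ℝ → ℝ) (u : ℝ → ℝ) (t : ℝ) : ℝ :=
  ∫ s in Set.Iic t, Real.exp (-m^2 * (t - s)) * f s * dV (u s)

section
variable {m : ℝ} {f dV : ℝ → ℝ}

lemma g_integrable (hfcont : Continuous f) (hfc : HasCompactSupport f) (hdV : Continuous dV)
    {u : ℝ → ℝ} (hu : Continuous u) :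
    Integrable (fun s => Real.exp (m^2 * s) * f s * dV (u s)) := by
  apply Continuous.integrable_of_hasCompactSupport
  · exact ((Real.continuous_exp.comp (continuous_const.mul continuous_id)).mul hfcont).mul
      (hdV.comp hu)
  · exact (hfc.mul_left).mul_right

lemma integrand_integrableOn (hfcont : Continuous f) (hfc : HasCompactSupport f)
    (hdV : Continuous dV) {u : ℝ → ℝ} (hu : Continuous u) (t : ℝ) :
    IntegrableOn (fun s => Real.exp (-m^2 * (t - s)) * f s * dV (u s)) (Set.Iic t) := by
  have h : (fun s => Real.exp (-m^2 * (t - s)) * f s * dV (u s))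
      = fun s => Real.exp (-m^2 * t) * (Real.exp (m^2 * s) * f s * dV (u s)) := by
    funext s
    rw [← mul_assoc, ← mul_assoc, ← Real.exp_add]
    congr 2
    ring_nf
  rw [h]
  exact (((g_integrable hfcont hfc hdV hu).const_mul _)).integrableOn

lemma Kop_continuous (hfcont : Continuous f) (hfc : HasCompactSupport f)
    (hdV : Continuous dV) {u : ℝ → ℝ} (hu : Continuous u) :
    Continuous (Kop m f dV u) := by
  have h : Kop m f dV u = fun t => Real.exp (-m^2 * t)
      * ∫ s in Set.Iic t, Real.exp (m^2 * s) * f s * dV (u s) := by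
    funext t
    rw [Kop, ← integral_const_mul]
    congr 1
    funext s
    rw [← mul_assoc, ← mul_assoc, ← Real.exp_add]
    congr 2
    ring_nf
  rw [h]
  exact (Real.continuous_exp.comp (continuous_const.mul continuous_id)).mul
    (primIic_continuous _ (g_integrable hfcont hfc hdV hu))

end
section
variable {m : ℝ} {f dV : ℝ → ℝ}

lemma Kop_bound (hfcont : Continuous f) (hfc : HasCompactSupport f) (hf0 : ∀ t, 0 ≤ f t)
    (hdV : Continuous dV) {C1 : ℝ} (hC1 : ∀ x, |dV x| ≤ C1)
    {u : ℝ → ℝ} (hu : Continuous u) (t : ℝ) :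
    |Kop m f dV u t| ≤ C1 * ∫ s, f s := by
  have hfi : Integrable f := hfcont.integrable_of_hasCompactSupport hfc
  have hC1nn : 0 ≤ C1 := le_trans (abs_nonneg _) (hC1 0)
  have h1 : |Kop m f dV u t|
      ≤ ∫ s in Set.Iic t, |Real.exp (-m^2 * (t - s)) * f s * dV (u s)| := by
    have := norm_integral_le_integral_norm (μ := volume.restrict (Set.Iic t))
        (f := fun s => Real.exp (-m^2 * (t - s)) * f s * dV (u s))
    simp only [Real.norm_eq_abs] at this
    exact this
  have h2 : (∫ s in Set.Iic t, |Real.exp (-m^2 * (t - s)) * f s * dV (u s)|)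
      ≤ ∫ s in Set.Iic t, C1 * f s := by
    apply setIntegral_mono_on
    · exact (integrand_integrableOn hfcont hfc hdV hu t).abs
    · exact (hfi.const_mul C1).integrableOn
    · exact measurableSet_Iic
    · intro s hs
      have he : Real.exp (-m^2 * (t - s)) ≤ 1 := by
        apply Real.exp_le_one_iff.mpr
        have : (0:ℝ) ≤ t - s := by simp at hs; linarith
        nlinarith [sq_nonneg m]
      have hepos : (0:ℝ) < Real.exp (-m^2 * (t - s)) := Real.exp_pos _
      rw [abs_mul, abs_mul, abs_of_pos hepos, abs_of_nonneg (hf0 s)]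
      calc Real.exp (-m^2 * (t - s)) * f s * |dV (u s)|
          ≤ 1 * f s * C1 := by
            apply mul_le_mul (mul_le_mul he le_rfl (hf0 s) zero_le_one) (hC1 _)
              (abs_nonneg _) (by simpa using hf0 s)
        _ = C1 * f s := by ring
  have h3 : (∫ s in Set.Iic t, C1 * f s) ≤ C1 * ∫ s, f s := by
    rw [integral_const_mul]
    exact mul_le_mul_of_nonneg_left
      (setIntegral_le_integral hfi (Filter.Eventually.of_forall hf0)) hC1nn
  linarith

lemma Kop_sub (hfcont : Continuous f) (hfc : HasCompactSupport f) (hf0 : ∀ t, 0 ≤ f t)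
    (hdV : Continuous dV) {u v : ℝ → ℝ} (hu : Continuous u) (hv : Continuous v)
    {Lr c : ℝ} (hLr : 0 ≤ Lr) (hc : 0 ≤ c)
    (hLip : ∀ a b, |dV a - dV b| ≤ Lr * |a - b|) (n : ℕ)
    (hb : ∀ s, |u s - v s| ≤ c * (∫ x in Set.Iic s, f x) ^ n) (t : ℝ) :
    |Kop m f dV u t - Kop m f dV v t|
      ≤ Lr * c * ((∫ x in Set.Iic t, f x) ^ (n + 1) / (n + 1)) := by
  have hfi : Integrable f := hfcont.integrable_of_hasCompactSupport hfc
  set A : ℝ → ℝ := fun r => ∫ x in Set.Iic r, f x with hA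
  have hAc : Continuous A := primIic_continuous f hfi
  have hA0 : ∀ r, 0 ≤ A r := fun r =>
    setIntegral_nonneg measurableSet_Iic (fun x _ => hf0 x)
  have hfAn : Integrable (fun s => f s * A s ^ n) := by
    apply Continuous.integrable_of_hasCompactSupport (hfcont.mul (hAc.pow n))
    exact hfc.mul_right
  have hsub : Kop m f dV u t - Kop m f dV v t
      = ∫ s in Set.Iic t, (Real.exp (-m^2 * (t - s)) * f s * dV (u s)
          - Real.exp (-m^2 * (t - s)) * f s * dV (v s)) := by
    rw [integral_sub (integrand_integrableOn hfcont hfc hdV hu t)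
      (integrand_integrableOn hfcont hfc hdV hv t)]
    rfl
  rw [hsub]
  have h1 : |∫ s in Set.Iic t, (Real.exp (-m^2 * (t - s)) * f s * dV (u s)
          - Real.exp (-m^2 * (t - s)) * f s * dV (v s))|
      ≤ ∫ s in Set.Iic t, |Real.exp (-m^2 * (t - s)) * f s * dV (u s)
          - Real.exp (-m^2 * (t - s)) * f s * dV (v s)| := by
    have := norm_integral_le_integral_norm (μ := volume.restrict (Set.Iic t))
        (f := fun s => Real.exp (-m^2 * (t - s)) * f s * dV (u s)
          - Real.exp (-m^2 * (t - s)) * f s * dV (v s))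
    simp only [Real.norm_eq_abs] at this
    exact this
  have h2 : (∫ s in Set.Iic t, |Real.exp (-m^2 * (t - s)) * f s * dV (u s)
          - Real.exp (-m^2 * (t - s)) * f s * dV (v s)|)
      ≤ ∫ s in Set.Iic t, (Lr * c) * (f s * A s ^ n) := by
    apply setIntegral_mono_on
    · exact ((integrand_integrableOn hfcont hfc hdV hu t).sub
        (integrand_integrableOn hfcont hfc hdV hv t)).abs
    · exact (hfAn.const_mul _).integrableOn
    · exact measurableSet_Iic
    · intro s hs
      have he : Real.exp (-m^2 * (t - s)) ≤ 1 := by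
        apply Real.exp_le_one_iff.mpr
        have : (0:ℝ) ≤ t - s := by simp at hs; linarith
        nlinarith [sq_nonneg m]
      have hepos : (0:ℝ) < Real.exp (-m^2 * (t - s)) := Real.exp_pos _
      have heq : Real.exp (-m^2 * (t - s)) * f s * dV (u s)
          - Real.exp (-m^2 * (t - s)) * f s * dV (v s)
          = Real.exp (-m^2 * (t - s)) * f s * (dV (u s) - dV (v s)) := by ring
      rw [heq, abs_mul, abs_mul, abs_of_pos hepos, abs_of_nonneg (hf0 s)]
      have hd : |dV (u s) - dV (v s)| ≤ Lr * (c * A s ^ n) :=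
        le_trans (hLip _ _) (mul_le_mul_of_nonneg_left (hb s) hLr)
      calc Real.exp (-m^2 * (t - s)) * f s * |dV (u s) - dV (v s)|
          ≤ 1 * f s * (Lr * (c * A s ^ n)) := by
            apply mul_le_mul (mul_le_mul he le_rfl (hf0 s) zero_le_one) hd
              (abs_nonneg _) (by simpa using hf0 s)
        _ = (Lr * c) * (f s * A s ^ n) := by ring
  have h3 : (∫ s in Set.Iic t, (Lr * c) * (f s * A s ^ n))
      = Lr * c * (A t ^ (n + 1) / (n + 1)) := by
    rw [integral_const_mul, primIic_pow f hfcont hfc n t]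
  linarith
end
theorem stmt4 (m : ℝ) (hm : 0 < m)
    (V : ℝ → ℝ) (hV : ContDiff ℝ (⊤ : ℕ∞) V)
    (hVb : ∀ n : ℕ, ∃ C : ℝ, ∀ x, |iteratedDeriv n V x| ≤ C)
    (f : ℝ → ℝ) (hf : ContDiff ℝ (⊤ : ℕ∞) f) (hf0 : ∀ t, 0 ≤ f t) (hfc : HasCompactSupport f)
    (ψ : ℝ → ℝ) (hψ : Continuous ψ) (hψb : ∃ C : ℝ, ∀ t, |ψ t| ≤ C) :
    ∃! φ : ℝ → ℝ, Continuous φ ∧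
      ∀ t, φ t + ∫ s in Set.Iic t, Real.exp (-m^2 * (t - s)) * f s * deriv V (φ s) = ψ t := by
  classical
  have hdV2 : ContDiff ℝ ((⊤:ℕ∞) : WithTop ℕ∞) (deriv V) := (contDiff_infty_iff_deriv.mp (hV.of_le (by simp))).2
  have hdVc : Continuous (deriv V) := hdV2.continuous
  obtain ⟨C1, hC1⟩ := hVb 1
  have hC1' : ∀ x, |deriv V x| ≤ C1 := by
    intro x; have := hC1 x; rwa [iteratedDeriv_one] at this
  obtain ⟨C2, hC2⟩ := hVb 2
  have hC2' : ∀ x, |deriv (deriv V) x| ≤ C2 := by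
    intro x; have := hC2 x
    rwa [iteratedDeriv_succ, iteratedDeriv_one] at this
  set Lr : ℝ := max C2 0 with hLrdef
  have hLr : (0:ℝ) ≤ Lr := le_max_right _ _
  have hLip : ∀ a b, |deriv V a - deriv V b| ≤ Lr * |a - b| := by
    intro a b
    have hdiff : Differentiable ℝ (deriv V) := hdV2.differentiable (by simp)
    have hlw : LipschitzWith (Real.toNNReal Lr) (deriv V) := by
      apply lipschitzWith_of_nnnorm_deriv_le hdiff
      intro x
      rw [← NNReal.coe_le_coe, coe_nnnorm, Real.norm_eq_abs, Real.coe_toNNReal _ hLr]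
      exact le_trans (hC2' x) (le_max_left _ _)
    have h := hlw.dist_le_mul a b
    rwa [Real.dist_eq, Real.dist_eq, Real.coe_toNNReal _ hLr] at h
  have hC1nn : (0:ℝ) ≤ C1 := le_trans (abs_nonneg _) (hC1' 0)
  have hfcont : Continuous f := hf.continuous
  have hfi : Integrable f := hfcont.integrable_of_hasCompactSupport hfc
  have hA0 : ∀ r : ℝ, 0 ≤ ∫ x in Set.Iic r, f x := fun r =>
    setIntegral_nonneg measurableSet_Iic fun x _ => hf0 x
  have hAle : ∀ r : ℝ, (∫ x in Set.Iic r, f x) ≤ ∫ x, f x := fun r =>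
    setIntegral_le_integral hfi (Filter.Eventually.of_forall hf0)
  have hAf0 : (0:ℝ) ≤ ∫ x, f x := integral_nonneg hf0
  obtain ⟨Cψ, hCψ⟩ := hψb
  set ψB : BoundedContinuousFunction ℝ ℝ :=
    BoundedContinuousFunction.ofNormedAddCommGroup ψ hψ Cψ
      (fun x => by rw [Real.norm_eq_abs]; exact hCψ x) with hψB
  set T : BoundedContinuousFunction ℝ ℝ → BoundedContinuousFunction ℝ ℝ := fun φ =>
    ψB - BoundedContinuousFunction.ofNormedAddCommGroup
      (Kop m f (deriv V) φ) (Kop_continuous hfcont hfc hdVc φ.continuous) (C1 * ∫ x, f x)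
      (fun t => by
        rw [Real.norm_eq_abs]; exact Kop_bound hfcont hfc hf0 hdVc hC1' φ.continuous t)
    with hTdef
  have hT_apply : ∀ (φ : BoundedContinuousFunction ℝ ℝ) (t : ℝ),
      T φ t = ψ t - Kop m f (deriv V) φ t := by
    intro φ t
    simp [hTdef, hψB]
  have key : ∀ (φ χ : BoundedContinuousFunction ℝ ℝ) (n : ℕ) (t : ℝ),
      |(T^[n] φ) t - (T^[n] χ) t|
        ≤ Lr ^ n * dist φ χ / (n.factorial : ℝ) * (∫ x in Set.Iic t, f x) ^ n := by
    intro φ χ n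
    induction n with
    | zero =>
      intro t
      simpa [Real.dist_eq] using BoundedContinuousFunction.dist_coe_le_dist (f := φ) (g := χ) t
    | succ n ih =>
      intro t
      rw [Function.iterate_succ_apply', Function.iterate_succ_apply']
      have h1 : T (T^[n] φ) t - T (T^[n] χ) t
          = Kop m f (deriv V) (T^[n] χ) t - Kop m f (deriv V) (T^[n] φ) t := by
        rw [hT_apply, hT_apply]; ring
      have hcnn : (0:ℝ) ≤ Lr ^ n * dist φ χ / (n.factorial : ℝ) := by positivity
      have h2 := Kop_sub (m := m) hfcont hfc hf0 hdVc (T^[n] χ).continuous (T^[n] φ).continuous hLr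
        hcnn hLip n (fun s => by rw [abs_sub_comm]; exact ih s) t
      rw [h1]
      refine le_trans h2 (le_of_eq ?_)
      have hfact : ((n+1).factorial : ℝ) = ((n:ℝ)+1) * (n.factorial : ℝ) := by
        rw [Nat.factorial_succ]; push_cast; ring
      have hne1 : ((n:ℝ)+1) ≠ 0 := by positivity
      have hne2 : ((n.factorial : ℝ)) ≠ 0 := Nat.cast_ne_zero.mpr n.factorial_ne_zero
      rw [hfact]
      field_simp
      ring
  have hq := FloorSemiring.tendsto_pow_div_factorial_atTop (K := ℝ) (Lr * ∫ x, f x)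
  obtain ⟨n, hn⟩ := (hq.eventually_lt_const (by norm_num : (0:ℝ) < 1)).exists
  set q : ℝ := (Lr * ∫ x, f x) ^ n / (n.factorial : ℝ) with hqdef
  have hq0 : (0:ℝ) ≤ q := by positivity
  have hdist : ∀ φ χ, dist (T^[n] φ) (T^[n] χ) ≤ q * dist φ χ := by
    intro φ χ
    apply (BoundedContinuousFunction.dist_le (by positivity)).mpr
    intro t
    rw [Real.dist_eq]
    refine le_trans (key φ χ n t) ?_
    have hAn : (∫ x in Set.Iic t, f x) ^ n ≤ (∫ x, f x) ^ n :=
      pow_le_pow_left₀ (hA0 t) (hAle t) n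
    calc Lr ^ n * dist φ χ / (n.factorial : ℝ) * (∫ x in Set.Iic t, f x) ^ n
        ≤ Lr ^ n * dist φ χ / (n.factorial : ℝ) * (∫ x, f x) ^ n := by
          apply mul_le_mul_of_nonneg_left hAn (by positivity)
      _ = q * dist φ χ := by rw [hqdef, mul_pow]; ring
  have cw : ContractingWith q.toNNReal (T^[n]) := by
    constructor
    · have h1 : (q.toNNReal : ℝ) < 1 := by rw [Real.coe_toNNReal _ hq0]; exact hn
      exact_mod_cast h1
    · apply LipschitzWith.of_dist_le_mul
      intro φ χ
      rw [Real.coe_toNNReal _ hq0]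
      exact hdist φ χ
  set x : BoundedContinuousFunction ℝ ℝ := cw.fixedPoint (T^[n]) with hxdef
  have hx : Function.IsFixedPt (T^[n]) x := cw.fixedPoint_isFixedPt
  have hTx : T x = x := by
    have h1 : Function.IsFixedPt (T^[n]) (T x) := by
      show T^[n] (T x) = T x
      rw [← Function.iterate_succ_apply, Function.iterate_succ_apply', hx]
    exact cw.fixedPoint_unique' h1 hx
  have huniq : ∀ y : BoundedContinuousFunction ℝ ℝ, T y = y → y = x := fun y hy =>
    cw.fixedPoint_unique' (Function.IsFixedPt.iterate hy n) hx
  refine ⟨⇑x, ⟨x.continuous, fun t => ?_⟩, ?_⟩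
  · have h := hT_apply x t
    rw [hTx] at h
    show x t + Kop m f (deriv V) (⇑x) t = ψ t
    linarith
  · rintro φ ⟨hφc, hφe⟩
    have hφe' : ∀ t, φ t = ψ t - Kop m f (deriv V) φ t := by
      intro t
      have h := hφe t
      have h2 : φ t + Kop m f (deriv V) φ t = ψ t := h
      linarith
    have hb : ∀ t, ‖φ t‖ ≤ Cψ + C1 * ∫ x, f x := by
      intro t
      rw [Real.norm_eq_abs, hφe' t]
      refine le_trans (abs_sub _ _) ?_
      exact add_le_add (hCψ t) (Kop_bound hfcont hfc hf0 hdVc hC1' hφc t)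
    set y : BoundedContinuousFunction ℝ ℝ :=
      BoundedContinuousFunction.ofNormedAddCommGroup φ hφc _ hb with hydef
    have hyc : ⇑y = φ := rfl
    have hTy : T y = y := by
      ext t
      rw [hT_apply]
      show ψ t - Kop m f (deriv V) (⇑y) t = φ t
      rw [hyc]
      linarith [hφe' t]
    have hyx := huniq y hTy
    rw [← hyc, hyx]
end
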